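/- arXiv:1902.05497 — 2 statements merged into one kernel-verified Lean document; each statement's English description precedes it below -/
import Mathlib

section
/- Let U ⊆ ℝⁿ be an open convex set and let (g_{ij})_{i,j} be a smooth family of symmetric matrices on U such that ∂_k g_{ij} = ∂_i g_{kj} for all i,j,k. Then there exists a smooth function f : U → ℝ with g_{ij} = ∂_i ∂_j f on U. -/
open Set MeasureTheory intervalIntegral Metric ContinuousLinearMap

lemma poincare {n : ℕ} {U : Set (Fin n → ℝ)} (hUopen : IsOpen U) (hUconv : Convex ℝ U)
    {x₀ : Fin n → ℝ} (hx₀ : x₀ ∈ U)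
    {ω : (Fin n → ℝ) → (Fin n → ℝ) →L[ℝ] ℝ}
    (hω : ContDiffOn ℝ 1 ω U)
    (hsym : ∀ x ∈ U, ∀ v w, fderiv ℝ ω x v w = fderiv ℝ ω x w v) :
    ∃ F : (Fin n → ℝ) → ℝ, ∀ x ∈ U, HasFDerivAt F (ω x) x := by
  set c : ℝ → (Fin n → ℝ) → (Fin n → ℝ) := fun t y => x₀ + t • (y - x₀) with hc
  have hcU : ∀ t ∈ Icc (0:ℝ) 1, ∀ y ∈ U, c t y ∈ U := by
    intro t ht y hy
    have : c t y = (1 - t) • x₀ + t • y := by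
      simp only [hc, smul_sub]; module
    rw [this]
    exact hUconv hx₀ hy (by linarith [ht.2]) ht.1 (by ring)
  refine ⟨fun y => ∫ t in (0:ℝ)..1, ω (c t y) (y - x₀), ?_⟩
  intro x hx
  have hωdiff : ∀ z ∈ U, HasFDerivAt ω (fderiv ℝ ω z) z := fun z hz =>
    ((hω.differentiableOn one_ne_zero).differentiableAt (hUopen.mem_nhds hz)).hasFDerivAt
  set A : ℝ → (Fin n → ℝ) → ((Fin n → ℝ) →L[ℝ] ℝ) := fun t y =>
    ω (c t y) + t • ((fderiv ℝ ω (c t y)).flip (y - x₀)) with hA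
  have hAapp : ∀ t y v, A t y v = ω (c t y) v + t * fderiv ℝ ω (c t y) v (y - x₀) := by
    intro t y v
    simp [hA, ContinuousLinearMap.flip_apply, smul_eq_mul]
  have hder : ∀ t ∈ Icc (0:ℝ) 1, ∀ y ∈ U,
      HasFDerivAt (fun y => ω (c t y) (y - x₀)) (A t y) y := by
    intro t ht y hy
    have hcder : HasFDerivAt (fun y => c t y) (t • ContinuousLinearMap.id ℝ (Fin n → ℝ)) y :=
      (((hasFDerivAt_id y).sub_const x₀).const_smul t).const_add x₀
    have h1 : HasFDerivAt (fun y => ω (c t y))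
        ((fderiv ℝ ω (c t y)).comp (t • ContinuousLinearMap.id ℝ (Fin n → ℝ))) y :=
      (hωdiff _ (hcU t ht y hy)).comp y hcder
    have h2 : HasFDerivAt (fun y : (Fin n → ℝ) => y - x₀) (ContinuousLinearMap.id ℝ (Fin n → ℝ)) y :=
      (hasFDerivAt_id y).sub_const x₀
    have h3 := h1.clm_apply h2
    refine h3.congr_fderiv ?_
    ext v
    simp only [hA, ContinuousLinearMap.add_apply, ContinuousLinearMap.comp_apply,
      ContinuousLinearMap.flip_apply, ContinuousLinearMap.coe_id', id_eq, _root_.map_smul,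
      ContinuousLinearMap.smul_apply, smul_eq_mul] <;> ring
  obtain ⟨ε, hε, hball⟩ : ∃ ε > 0, closedBall x ε ⊆ U :=
    (Metric.nhds_basis_closedBall.mem_iff).1 (hUopen.mem_nhds hx)
  set S : Set (Fin n → ℝ) := (fun p : ℝ × (Fin n → ℝ) => c p.1 p.2) '' (Icc 0 1 ×ˢ closedBall x ε) with hS
  have hScomp : IsCompact S := by
    apply IsCompact.image (isCompact_Icc.prod (isCompact_closedBall x ε))
    fun_prop
  have hSU : S ⊆ U := by
    rintro - ⟨⟨t, y⟩, ⟨ht, hy⟩, rfl⟩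
    exact hcU t ht y (hball hy)
  obtain ⟨C₁, hC₁⟩ := hScomp.exists_bound_of_continuousOn ((hω.continuousOn).mono hSU)
  obtain ⟨C₂, hC₂⟩ := hScomp.exists_bound_of_continuousOn
    ((hω.continuousOn_fderiv_of_isOpen hUopen le_rfl).mono hSU)
  have hmemS : ∀ t ∈ Icc (0:ℝ) 1, ∀ y ∈ closedBall x ε, c t y ∈ S := by
    intro t ht y hy; exact ⟨(t, y), ⟨ht, hy⟩, rfl⟩
  set B : ℝ := |C₁| + |C₂| * (‖x - x₀‖ + ε) with hB
  have hbound : ∀ t ∈ Icc (0:ℝ) 1, ∀ y ∈ ball x ε, ‖A t y‖ ≤ B := by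
    intro t ht y hy
    have hyc : y ∈ closedBall x ε := ball_subset_closedBall hy
    have hcS := hmemS t ht y hyc
    have hyx : ‖y - x₀‖ ≤ ‖x - x₀‖ + ε := by
      calc ‖y - x₀‖ = ‖(y - x) + (x - x₀)‖ := by ring_nf
        _ ≤ ‖y - x‖ + ‖x - x₀‖ := norm_add_le _ _
        _ ≤ ε + ‖x - x₀‖ := by
            have := mem_closedBall_iff_norm.1 hyc; linarith
        _ = ‖x - x₀‖ + ε := by ring
    have ht1 : |t| ≤ 1 := by rw [abs_le]; constructor <;> linarith [ht.1, ht.2]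
    have e1 : ‖ω (c t y)‖ ≤ |C₁| := (hC₁ _ hcS).trans (le_abs_self _)
    have e2 : ‖(fderiv ℝ ω (c t y)).flip (y - x₀)‖ ≤ |C₂| * (‖x - x₀‖ + ε) := by
      calc ‖(fderiv ℝ ω (c t y)).flip (y - x₀)‖
          ≤ ‖(fderiv ℝ ω (c t y)).flip‖ * ‖y - x₀‖ := ContinuousLinearMap.le_opNorm _ _
        _ ≤ |C₂| * (‖x - x₀‖ + ε) := by
            rw [ContinuousLinearMap.opNorm_flip]
            exact mul_le_mul ((hC₂ _ hcS).trans (le_abs_self _)) hyx (norm_nonneg _) (abs_nonneg _)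
    have e3 : ‖t • ((fderiv ℝ ω (c t y)).flip (y - x₀))‖
        = |t| * ‖(fderiv ℝ ω (c t y)).flip (y - x₀)‖ := by
      rw [norm_smul, Real.norm_eq_abs]
    calc ‖A t y‖ ≤ ‖ω (c t y)‖ + ‖t • ((fderiv ℝ ω (c t y)).flip (y - x₀))‖ := norm_add_le _ _
      _ ≤ B := by
          rw [e3, hB]
          nlinarith [norm_nonneg ((fderiv ℝ ω (c t y)).flip (y - x₀)), abs_nonneg t]
  have hctsc : ∀ y : (Fin n → ℝ), Continuous fun t => c t y := by intro y; fun_prop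
  have hmapx : ∀ t ∈ Icc (0:ℝ) 1, c t x ∈ U := fun t ht => hcU t ht x hx
  have hcont : ∀ y ∈ closedBall x ε, ContinuousOn (fun t => ω (c t y) (y - x₀)) (Icc 0 1) := by
    intro y hy
    have : ContinuousOn (fun t => ω (c t y)) (Icc 0 1) :=
      (hω.continuousOn).comp (hctsc y).continuousOn (fun t ht => hcU t ht y (hball hy))
    exact this.clm_apply continuousOn_const
  have hcontA : ContinuousOn (fun t => A t x) (Icc 0 1) := by
    have hcx : ContinuousOn (fun t => c t x) (Icc 0 1) := (hctsc x).continuousOn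
    have h1 : ContinuousOn (fun t => ω (c t x)) (Icc 0 1) :=
      (hω.continuousOn).comp hcx hmapx
    have h2 : ContinuousOn (fun t => fderiv ℝ ω (c t x)) (Icc 0 1) :=
      (hω.continuousOn_fderiv_of_isOpen hUopen le_rfl).comp hcx hmapx
    have h3 : ContinuousOn (fun t => (fderiv ℝ ω (c t x)).flip) (Icc 0 1) :=
      (ContinuousLinearMap.flipₗᵢ ℝ (Fin n → ℝ) (Fin n → ℝ) ℝ).continuous.comp_continuousOn h2
    exact h1.add (continuousOn_id.smul (h3.clm_apply continuousOn_const))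
  -- differentiation under the integral sign
  have key := intervalIntegral.hasFDerivAt_integral_of_dominated_of_fderiv_le
    (F := fun y t => ω (c t y) (y - x₀)) (F' := fun y t => A t y) (μ := volume)
    (a := 0) (b := 1) (bound := fun _ => B) (x₀ := x) (ball_mem_nhds x hε)
    (Filter.eventually_of_mem (ball_mem_nhds x hε) (fun y hy =>
      ((hcont y (ball_subset_closedBall hy)).mono
        (by rw [uIoc_of_le zero_le_one]; exact Ioc_subset_Icc_self)).aestronglyMeasurable
        measurableSet_uIoc))
    ((hcont x (mem_closedBall_self hε.le)).intervalIntegrable_of_Icc zero_le_one)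
    ((hcontA.mono (by rw [uIoc_of_le zero_le_one]; exact Ioc_subset_Icc_self)).aestronglyMeasurable
      measurableSet_uIoc)
    (Filter.Eventually.of_forall (fun t ht y hy => by
      rw [uIoc_of_le zero_le_one] at ht
      exact hbound t (Ioc_subset_Icc_self ht) y hy))
    (intervalIntegrable_const)
    (Filter.Eventually.of_forall (fun t ht y hy => by
      rw [uIoc_of_le zero_le_one] at ht
      exact hder t (Ioc_subset_Icc_self ht) y (hball (ball_subset_closedBall hy))))
  -- identify the integral with ω x
  have hint : IntervalIntegrable (fun t => A t x) volume 0 1 :=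
    hcontA.intervalIntegrable_of_Icc zero_le_one
  have hval : (∫ t in (0:ℝ)..1, A t x) = ω x := by
    ext v
    rw [ContinuousLinearMap.intervalIntegral_apply hint]
    have hFTC : ∀ t ∈ uIcc (0:ℝ) 1,
        HasDerivAt (fun s => s * ω (c s x) v) (A t x v) t := by
      intro t ht
      rw [uIcc_of_le zero_le_one] at ht
      -- c s x ∈ U for s in a neighborhood of t
      have hUt : {s : ℝ | c s x ∈ U} ∈ nhds t :=
        (hUopen.preimage (hctsc x)).mem_nhds (hmapx t ht)
      have hcs : HasDerivAt (fun s => c s x) (x - x₀) t := by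
        have : HasDerivAt (fun s : ℝ => s • (x - x₀)) ((1:ℝ) • (x - x₀)) t := by
          simpa using (hasDerivAt_id t).smul_const (x - x₀)
        simpa only [one_smul] using this.const_add x₀
      have hωc : HasDerivAt (fun s => ω (c s x))
          (fderiv ℝ ω (c t x) (x - x₀)) t :=
        (hωdiff _ (hmapx t ht)).comp_hasDerivAt t hcs
      have hωcv : HasDerivAt (fun s => ω (c s x) v)
          (fderiv ℝ ω (c t x) (x - x₀) v) t := by
        have := hωc.clm_apply (hasDerivAt_const t v)
        simpa using this
      rw [hAapp, hsym _ (hmapx t ht) v (x - x₀)]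
      simpa using (hasDerivAt_id' t).fun_mul hωcv
    have hintv : IntervalIntegrable (fun t => A t x v) volume 0 1 :=
      (hcontA.clm_apply continuousOn_const).intervalIntegrable_of_Icc zero_le_one
    rw [intervalIntegral.integral_eq_sub_of_hasDerivAt hFTC hintv]
    simp [hc]
  rw [hval] at key
  exact key


open Set MeasureTheory intervalIntegral Metric
open scoped NNReal ENNReal
set_option maxHeartbeats 1000000

section Main

open Set Metric ContinuousLinearMap Filter

-- expansion of a continuous linear functional on ℝⁿ in coordinates
lemma clm_expand {n : ℕ} (D : (Fin n → ℝ) →L[ℝ] ℝ) (v : Fin n → ℝ) :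
    D v = ∑ k, v k * D (Pi.single k 1) := by
  have hv : v = ∑ k, v k • (Pi.single k 1 : Fin n → ℝ) := by
    ext m
    simp [Finset.sum_apply, Pi.single_apply]
  conv_lhs => rw [hv]
  rw [map_sum]
  simp [smul_eq_mul]

/-- If `g : U → Matₙ(ℝ)` is smooth on an open convex `U ⊆ ℝⁿ`, each `g x`
is symmetric, and `∂ₖ g_{ij} = ∂ᵢ g_{kj}`, then there is a smooth `f : U → ℝ` with
`g_{ij} = ∂ᵢ∂ⱼ f` on `U`. -/
theorem stmt5 {n : ℕ} (U : Set (Fin n → ℝ)) (hUopen : IsOpen U) (hUconv : Convex ℝ U)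
    (g : (Fin n → ℝ) → (Fin n → Fin n → ℝ))
    (hg : ContDiffOn ℝ (⊤ : ℕ∞) g U)
    (hsymm : ∀ x ∈ U, ∀ i j, g x i j = g x j i)
    (hsym3 : ∀ x ∈ U, ∀ i j k,
      fderiv ℝ (fun y => g y i j) x (Pi.single k 1)
        = fderiv ℝ (fun y => g y k j) x (Pi.single i 1)) :
    ∃ f : (Fin n → ℝ) → ℝ, ContDiffOn ℝ (⊤ : ℕ∞) f U ∧
      ∀ x ∈ U, ∀ i j,
        fderiv ℝ (fun y => fderiv ℝ f y (Pi.single i 1)) x (Pi.single j 1) = g x i j := by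
  rcases Set.eq_empty_or_nonempty U with rfl | ⟨x₀, hx₀⟩
  · exact ⟨fun _ => 0, contDiffOn_const, fun x hx => (Set.notMem_empty x hx).elim⟩
  -- smoothness of the matrix entries
  have hcomp : ∀ i j : Fin n, ContDiffOn ℝ (⊤ : ℕ∞) (fun x => g x i j) U := by
    intro i j
    have h1 : ContDiffOn ℝ (⊤ : ℕ∞) (fun x => g x i) U :=
      (ContinuousLinearMap.proj (R := ℝ) (φ := fun _ : Fin n => Fin n → ℝ) i).contDiff.comp_contDiffOn hg
    exact (ContinuousLinearMap.proj (R := ℝ) (φ := fun _ : Fin n => ℝ) j).contDiff.comp_contDiffOn h1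
  have hdiffc : ∀ (i j : Fin n), ∀ x ∈ U, DifferentiableAt ℝ (fun y => g y i j) x := by
    intro i j x hx
    exact ((hcomp i j).differentiableOn (by simp)).differentiableAt (hUopen.mem_nhds hx)
  -- the 1-forms ω j = ∑ i g_{ij} dx_i
  set ω : Fin n → (Fin n → ℝ) → (Fin n → ℝ) →L[ℝ] ℝ := fun j x =>
    ∑ i, g x i j • (ContinuousLinearMap.proj (R := ℝ) (φ := fun _ : Fin n => ℝ) i) with hω
  have hωapp : ∀ (j : Fin n) (x : Fin n → ℝ) (v : Fin n → ℝ),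
      ω j x v = ∑ i, g x i j * v i := by
    intro j x v
    simp [hω, ContinuousLinearMap.sum_apply, smul_eq_mul]
  have hωcd : ∀ j, ContDiffOn ℝ (⊤ : ℕ∞) (ω j) U := by
    intro j
    exact ContDiffOn.sum (fun i _ => (hcomp i j).smul contDiffOn_const)
  have hωfder : ∀ (j : Fin n), ∀ x ∈ U, HasFDerivAt (ω j)
      (∑ i, (fderiv ℝ (fun y => g y i j) x).smulRight
        (ContinuousLinearMap.proj (R := ℝ) (φ := fun _ : Fin n => ℝ) i)) x := by
    intro j x hx
    exact HasFDerivAt.fun_sum (fun i _ =>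
      ((hdiffc i j x hx).hasFDerivAt).smul_const (ContinuousLinearMap.proj (R := ℝ) (φ := fun _ : Fin n => ℝ) i))
  have hωfderapp : ∀ (j : Fin n), ∀ x ∈ U, ∀ v w : Fin n → ℝ,
      fderiv ℝ (ω j) x v w = ∑ i, fderiv ℝ (fun y => g y i j) x v * w i := by
    intro j x hx v w
    rw [(hωfder j x hx).fderiv]
    simp [ContinuousLinearMap.sum_apply, ContinuousLinearMap.smulRight_apply, smul_eq_mul]
  have hsymω : ∀ (j : Fin n), ∀ x ∈ U, ∀ v w : Fin n → ℝ,
      fderiv ℝ (ω j) x v w = fderiv ℝ (ω j) x w v := by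
    intro j x hx v w
    rw [hωfderapp j x hx, hωfderapp j x hx]
    have key : ∀ i k : Fin n, fderiv ℝ (fun y => g y i j) x (Pi.single k 1)
        = fderiv ℝ (fun y => g y k j) x (Pi.single i 1) := fun i k => hsym3 x hx i j k
    calc ∑ i, fderiv ℝ (fun y => g y i j) x v * w i
        = ∑ i, ∑ k, v k * fderiv ℝ (fun y => g y i j) x (Pi.single k 1) * w i := by
          apply Finset.sum_congr rfl; intro i _
          rw [clm_expand (fderiv ℝ (fun y => g y i j) x) v, Finset.sum_mul]
      _ = ∑ i, ∑ k, v k * fderiv ℝ (fun y => g y k j) x (Pi.single i 1) * w i := by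
          apply Finset.sum_congr rfl; intro i _
          apply Finset.sum_congr rfl; intro k _
          rw [key i k]
      _ = ∑ k, ∑ i, v k * fderiv ℝ (fun y => g y k j) x (Pi.single i 1) * w i :=
          Finset.sum_comm
      _ = ∑ k, fderiv ℝ (fun y => g y k j) x w * v k := by
          apply Finset.sum_congr rfl; intro k _
          rw [clm_expand (fderiv ℝ (fun y => g y k j) x) w, Finset.sum_mul]
          apply Finset.sum_congr rfl; intro i _
          ring
  -- first Poincaré: potentials for each 1-form
  have hPoin : ∀ j, ∃ Fj : (Fin n → ℝ) → ℝ, ∀ x ∈ U, HasFDerivAt Fj (ω j x) x := fun j =>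
    poincare hUopen hUconv hx₀ ((hωcd j).of_le (by simp)) (hsymω j)
  choose F hF using hPoin
  have hFsmooth : ∀ j, ContDiffOn ℝ (⊤ : ℕ∞) (F j) U := by
    intro j
    refine (contDiffOn_infty_iff_fderiv_of_isOpen hUopen).2
      ⟨fun x hx => (hF j x hx).differentiableAt.differentiableWithinAt, ?_⟩
    apply (hωcd j).congr
    intro x hx
    rw [(hF j x hx).fderiv]
  -- the 1-form Φ = ∑ j F_j dx_j
  set Φ : (Fin n → ℝ) → (Fin n → ℝ) →L[ℝ] ℝ := fun x =>
    ∑ j, F j x • (ContinuousLinearMap.proj (R := ℝ) (φ := fun _ : Fin n => ℝ) j) with hΦ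
  have hΦapp : ∀ (x : Fin n → ℝ) (v : Fin n → ℝ), Φ x v = ∑ j, F j x * v j := by
    intro x v
    simp [hΦ, ContinuousLinearMap.sum_apply, smul_eq_mul]
  have hΦcd : ContDiffOn ℝ (⊤ : ℕ∞) Φ U :=
    ContDiffOn.sum (fun j _ => (hFsmooth j).smul contDiffOn_const)
  have hΦfder : ∀ x ∈ U, HasFDerivAt Φ
      (∑ j, (ω j x).smulRight
        (ContinuousLinearMap.proj (R := ℝ) (φ := fun _ : Fin n => ℝ) j)) x := by
    intro x hx
    exact HasFDerivAt.fun_sum (fun j _ => (hF j x hx).smul_const (ContinuousLinearMap.proj (R := ℝ) (φ := fun _ : Fin n => ℝ) j))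
  have hΦfderapp : ∀ x ∈ U, ∀ v w : Fin n → ℝ,
      fderiv ℝ Φ x v w = ∑ j, ω j x v * w j := by
    intro x hx v w
    rw [(hΦfder x hx).fderiv]
    simp [ContinuousLinearMap.sum_apply, ContinuousLinearMap.smulRight_apply, smul_eq_mul]
  have hsymΦ : ∀ x ∈ U, ∀ v w : Fin n → ℝ,
      fderiv ℝ Φ x v w = fderiv ℝ Φ x w v := by
    intro x hx v w
    rw [hΦfderapp x hx, hΦfderapp x hx]
    calc ∑ j, ω j x v * w j
        = ∑ j, ∑ i, g x i j * v i * w j := by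
          apply Finset.sum_congr rfl; intro j _
          rw [hωapp j x v, Finset.sum_mul]
      _ = ∑ i, ∑ j, g x i j * v i * w j := Finset.sum_comm
      _ = ∑ j, ω j x w * v j := by
          apply Finset.sum_congr rfl; intro j _
          rw [hωapp j x w, Finset.sum_mul]
          apply Finset.sum_congr rfl; intro i _
          rw [hsymm x hx j i]
          ring
  -- second Poincaré: the potential function
  obtain ⟨f, hf⟩ := poincare hUopen hUconv hx₀ (hΦcd.of_le (by simp)) hsymΦ
  have hfsmooth : ContDiffOn ℝ (⊤ : ℕ∞) f U := by
    refine (contDiffOn_infty_iff_fderiv_of_isOpen hUopen).2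
      ⟨fun x hx => (hf x hx).differentiableAt.differentiableWithinAt, ?_⟩
    apply hΦcd.congr
    intro x hx
    rw [(hf x hx).fderiv]
  refine ⟨f, hfsmooth, ?_⟩
  intro x hx i j
  have hev : (fun y => fderiv ℝ f y (Pi.single i 1)) =ᶠ[nhds x] (F i) := by
    filter_upwards [hUopen.mem_nhds hx] with y hy
    rw [(hf y hy).fderiv, hΦapp]
    rw [Finset.sum_eq_single i]
    · rw [Pi.single_eq_same, mul_one]
    · intro b _ hb
      rw [Pi.single_eq_of_ne hb, mul_zero]
    · intro hmem
      exact absurd (Finset.mem_univ i) hmem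
  rw [hev.fderiv_eq, (hF i x hx).fderiv, hωapp]
  rw [Finset.sum_eq_single j]
  · rw [Pi.single_eq_same, mul_one]
    exact hsymm x hx j i
  · intro b _ hb
    rw [Pi.single_eq_of_ne hb, mul_zero]
  · intro hmem
    exact absurd (Finset.mem_univ j) hmem

end Main
end

section
/- Let (M, I, ∇, g, ω) be a Kähler manifold with a flat torsion-free connection ∇ satisfying ∇ω = 0, where ω(X,Y) = g(IX,Y). If ∇I, viewed as a tensor in Λ¹ ⊗ Λ¹ ⊗ TM, is symmetric in its first two arguments, then ∇g is a totally symmetric 3-tensor. -/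
/-- pointwise form: Let `g` be a symmetric bilinear form on a real vector
space `V`, `I` a complex structure compatible with `g`, and `ω x y = g (I x) y` the Kähler
form. Let `A = ∇I` (a linear map `V → End V`) be symmetric in its first two arguments
(`A x y = A y x`), and suppose `∇ω = 0`, whose pointwise content is that each `A x` lies in
the symplectic Lie algebra of `ω` (`ω (A x y) z + ω y (A x z) = 0`). Then the 3-tensor
`∇g`, given by `(x, y, z) ↦ ω y (A x z)`, is totally symmetric. -/
theorem stmt6 {V : Type*} [AddCommGroup V] [Module ℝ V]
    (g : V →ₗ[ℝ] V →ₗ[ℝ] ℝ) (hgsymm : ∀ x y, g x y = g y x)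
    (I : V →ₗ[ℝ] V) (hI : ∀ x, I (I x) = -x)
    (hgI : ∀ x y, g (I x) (I y) = g x y)
    (ω : V → V → ℝ) (hω : ∀ x y, ω x y = g (I x) y)
    (A : V →ₗ[ℝ] V →ₗ[ℝ] V)
    (hAsymm : ∀ x y, A x y = A y x)
    (hAsp : ∀ x y z, ω (A x y) z + ω y (A x z) = 0) :
    (∀ x y z, ω y (A x z) = ω x (A y z)) ∧
    (∀ x y z, ω y (A x z) = ω z (A x y)) := by
  -- ω is antisymmetric
  have hanti : ∀ x y, ω x y = -ω y x := by
    intro x y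
    rw [hω, hω]
    have h1 : g (I x) y = g (I (I x)) (I y) := (hgI (I x) y).symm
    rw [h1, hI, map_neg, hgsymm]
    simp
  -- first symmetry
  have h1 : ∀ x y z, ω y (A x z) = ω x (A y z) := by
    intro x y z
    have hsp := hAsp z x y
    have : ω (A z x) y = -ω x (A z y) := by linarith
    calc ω y (A x z) = -ω (A x z) y := by rw [hanti]
      _ = -ω (A z x) y := by rw [hAsymm x z]
      _ = ω x (A z y) := by rw [this]; ring
      _ = ω x (A y z) := by rw [hAsymm z y]
  refine ⟨h1, fun x y z => ?_⟩
  calc ω y (A x z) = ω x (A y z) := h1 x y z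
    _ = ω x (A z y) := by rw [hAsymm y z]
    _ = ω z (A x y) := h1 z x y
end
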